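/- Let c₁, c₂, r, δ₁ > 0 and λ > 1 with c₁ < c₂. If c₁·δ₁² < r/λ ≤ c₂·δ₁², then c₁·λδ₁ + r/(λδ₁) < c₁·δ₁ + r/δ₁ (agent 1 strictly prefers the harder route alone) and c₂·δ₁ + r/δ₁ ≤ c₂·λδ₁ + r/(λδ₁) (agent 2 weakly prefers the easier route alone). Hence the two agents' solo-optimal routes differ. -/

import Mathlib

/-!
Scaling the difficulty from `δ` to `λδ` changes the solo cost `cδ + r/δ` by
`(λ - 1)/(λδ) · (cλδ² - r)`, so for `λ > 1` the harder route is cheaper exactly when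
`cδ² < r/λ`. The threshold `r/λ` separates the two agents' values `c₁δ₁²` and `c₂δ₁²`.
-/

noncomputable def soloCost (c r δ : ℝ) : ℝ := c * δ + r / δ

lemma soloCost_mul_sub (c r : ℝ) {δ lam : ℝ} (hδ : δ ≠ 0) (hlam : lam ≠ 0) :
    soloCost c r (lam * δ) - soloCost c r δ = (lam - 1) / (lam * δ) * (c * lam * δ ^ 2 - r) := by
  unfold soloCost
  field_simp
  ring

lemma soloCost_mul_lt_iff (c r : ℝ) {δ lam : ℝ} (hδ : 0 < δ) (hlam : 1 < lam) :
    soloCost c r (lam * δ) < soloCost c r δ ↔ c * δ ^ 2 < r / lam := by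
  have hlam₀ : 0 < lam := one_pos.trans hlam
  have hfactor : 0 < (lam - 1) / (lam * δ) := div_pos (sub_pos.2 hlam) (mul_pos hlam₀ hδ)
  rw [← sub_neg, soloCost_mul_sub c r hδ.ne' hlam₀.ne', ← mul_zero ((lam - 1) / (lam * δ)),
    mul_lt_mul_iff_of_pos_left hfactor, sub_neg, lt_div_iff₀ hlam₀]
  ring_nf

lemma soloCost_le_mul_iff (c r : ℝ) {δ lam : ℝ} (hδ : 0 < δ) (hlam : 1 < lam) :
    soloCost c r δ ≤ soloCost c r (lam * δ) ↔ r / lam ≤ c * δ ^ 2 := by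
  rw [← not_lt, ← not_lt, soloCost_mul_lt_iff c r hδ hlam]

theorem neutrality_routes_differ_general (c₁ c₂ r δ₁ lam : ℝ)
    (hδ : 0 < δ₁) (hlam : 1 < lam)
    (h₁ : c₁ * δ₁ ^ 2 < r / lam) (h₂ : r / lam ≤ c₂ * δ₁ ^ 2) :
    c₁ * (lam * δ₁) + r / (lam * δ₁) < c₁ * δ₁ + r / δ₁ ∧
    c₂ * δ₁ + r / δ₁ ≤ c₂ * (lam * δ₁) + r / (lam * δ₁) :=
  ⟨(soloCost_mul_lt_iff c₁ r hδ hlam).2 h₁, (soloCost_le_mul_iff c₂ r hδ hlam).2 h₂⟩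

theorem neutrality_routes_differ (c₁ c₂ r δ₁ lam : ℝ) (hc₁ : 0 < c₁) (hc₂ : 0 < c₂)
    (hr : 0 < r) (hδ : 0 < δ₁) (hlam : 1 < lam) (hcc : c₁ < c₂)
    (h₁ : c₁ * δ₁ ^ 2 < r / lam) (h₂ : r / lam ≤ c₂ * δ₁ ^ 2) :
    c₁ * (lam * δ₁) + r / (lam * δ₁) < c₁ * δ₁ + r / δ₁ ∧
    c₂ * δ₁ + r / δ₁ ≤ c₂ * (lam * δ₁) + r / (lam * δ₁) :=
  neutrality_routes_differ_general c₁ c₂ r δ₁ lam hδ hlam h₁ h₂
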